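/- arXiv:1708.04798 — 13 statements merged into one kernel-verified Lean document; each statement's English description precedes it below -/
import Mathlib

section
/- Corollary (From Controllability to Integrity): For every attacker α (determined by a set C_α of controllable components), every initial state σ₀, and every k ≥ 1, if the k-controllability of α is greater than 1, i.e. |π_Y(Σ^k_α)| > 1, then there exists m with 1 ≤ m ≤ k such that the CPS does not satisfy m-process integrity against α. -/
/-- The set of states of a CPS: `((i, o, u), (q, x), y)` where `i, o, u` are
(dependent) functions over the index sets of digital inputs, digital outputs and
analog control signals. -/
abbrev CState {ιI ιO ιU : Type*} (VI : ιI → Type*) (VO : ιO → Type*) (VU : ιU → Type*)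
    (Q X Y : Type*) :=
  ((∀ a, VI a) × (∀ b, VO b) × (∀ c, VU c)) × (Q × X) × Y

/-- A CPS model: transition/output functions of controller, sensor, actuator and process. -/
structure CPS {ιI ιO ιU : Type*} (VI : ιI → Type*) (VO : ιO → Type*) (VU : ιU → Type*)
    (Q X Y : Type*) where
  δIO : Q → (∀ a, VI a) → Q
  γIO : Q → (∀ a, VI a) → ∀ b, VO b
  γAD : Y → ∀ a, VI a
  γDA : (∀ b, VO b) → ∀ c, VU c
  γΦ : X → (∀ c, VU c) → Y
  δΦ : X → (∀ c, VU c) → X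

variable {ιI ιO ιU : Type*} {VI : ιI → Type*} {VO : ιO → Type*} {VU : ιU → Type*}
  {Q X Y : Type*}

/-- Single-cycle semantics `⟦·⟧` of a CPS. -/
def CPS.step (M : CPS VI VO VU Q X Y) (σ : CState VI VO VU Q X Y) :
    CState VI VO VU Q X Y :=
  ⟨⟨M.γAD σ.2.2, M.γIO σ.2.1.1 σ.1.1, M.γDA σ.1.2.1⟩,
   ⟨M.δIO σ.2.1.1 σ.1.1, M.δΦ σ.2.1.2 σ.1.2.2⟩,
   M.γΦ σ.2.1.2 σ.1.2.2⟩

/-- Projection `π_Y` of a state to its `y`-component. -/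
def piY (σ : CState VI VO VU Q X Y) : Y := σ.2.2

/-- `H`-equivalence of states with respect to the set `Cα` of controllable components:
the states agree on `(q, x, y)` and on every controllable component not in `Cα`. -/
def HEquiv (Cα : Set (ιI ⊕ ιO ⊕ ιU)) (σ σ' : CState VI VO VU Q X Y) : Prop :=
  σ.2 = σ'.2 ∧
  (∀ a : ιI, Sum.inl a ∉ Cα → σ.1.1 a = σ'.1.1 a) ∧
  (∀ b : ιO, Sum.inr (Sum.inl b) ∉ Cα → σ.1.2.1 b = σ'.1.2.1 b) ∧
  (∀ c : ιU, Sum.inr (Sum.inr c) ∉ Cα → σ.1.2.2 c = σ'.1.2.2 c)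

/-- The CPS satisfies `m`-process integrity against the attacker determined by `Cα`
iff `H`-equivalent states yield process-equivalent states after `m` cycles. -/
def ProcessIntegrity (M : CPS VI VO VU Q X Y) (Cα : Set (ιI ⊕ ιO ⊕ ιU)) (m : ℕ) : Prop :=
  ∀ σ σ' : CState VI VO VU Q X Y, HEquiv Cα σ σ' → piY (M.step^[m] σ) = piY (M.step^[m] σ')

/-- The sets `Σ^k_α` of states reachable in `k` cycles from `σ₀` under attacks by the
attacker determined by `Cα`. -/
def reach (M : CPS VI VO VU Q X Y) (Cα : Set (ιI ⊕ ιO ⊕ ιU))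
    (σ₀ : CState VI VO VU Q X Y) : ℕ → Set (CState VI VO VU Q X Y)
  | 0 => {σ₀}
  | k + 1 => {τ | ∃ σ : CState VI VO VU Q X Y,
      (∃ σ' ∈ reach M Cα σ₀ k, HEquiv Cα σ σ') ∧ τ = M.step σ}

lemma reach_piY_eq (M : CPS VI VO VU Q X Y) (Cα : Set (ιI ⊕ ιO ⊕ ιU))
    (σ₀ : CState VI VO VU Q X Y) :
    ∀ k n (τ : CState VI VO VU Q X Y), τ ∈ reach M Cα σ₀ k →
      (∀ m, 1 ≤ m → m ≤ n + k → ProcessIntegrity M Cα m) →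
      piY (M.step^[n] τ) = piY (M.step^[n + k] σ₀) := by
  intro k
  induction k with
  | zero => rintro n τ rfl _; rfl
  | succ k ih =>
    rintro n τ ⟨σ, ⟨σ', hσ', hH⟩, rfl⟩ hint
    have h1 : piY (M.step^[n] (M.step σ)) = piY (M.step^[n + 1] σ) := by
      rw [Function.iterate_succ_apply]
    rw [h1, hint (n + 1) (by omega) (by omega) σ σ' hH]
    have := ih (n + 1) σ' hσ' (fun m h1 h2 => hint m h1 (by omega))
    rw [this, show n + 1 + k = n + (k + 1) by omega]

/-- From Controllability to Integrity: for every attacker `Cα`, initial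
state `σ₀` and `k ≥ 1`, if the `k`-controllability `|π_Y(Σ^k_α)| > 1`, then there is
`1 ≤ m ≤ k` such that the CPS does not satisfy `m`-process integrity against the attacker. -/
theorem controllability_to_integrity
    [∀ a, Nonempty (VI a)] [∀ b, Nonempty (VO b)] [∀ c, Nonempty (VU c)]
    [Nonempty Q] [Nonempty X] [Nonempty Y]
    (M : CPS VI VO VU Q X Y) (Cα : Set (ιI ⊕ ιO ⊕ ιU))
    (σ₀ : CState VI VO VU Q X Y) (k : ℕ) (hk : 1 ≤ k)
    (h : 1 < Cardinal.mk (piY '' reach M Cα σ₀ k)) :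
    ∃ m, 1 ≤ m ∧ m ≤ k ∧ ¬ ProcessIntegrity M Cα m := by
  by_contra hcon
  push_neg at hcon
  have hsub : (piY '' reach M Cα σ₀ k).Subsingleton := by
    rintro _ ⟨τ, hτ, rfl⟩ _ ⟨τ', hτ', rfl⟩
    have h1 := reach_piY_eq M Cα σ₀ k 0 τ hτ
      (fun m hm1 hm2 => hcon m hm1 (by omega))
    have h2 := reach_piY_eq M Cα σ₀ k 0 τ' hτ'
      (fun m hm1 hm2 => hcon m hm1 (by omega))
    simp only [Function.iterate_zero_apply] at h1 h2
    rw [h1, h2]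
  exact absurd (Cardinal.mk_le_one_iff_set_subsingleton.2 hsub) (not_le.2 h)
end

section
/- If the CPS satisfies m-process integrity against the attacker α for every m with 1 ≤ m ≤ k, then for every initial state σ₀ the set of outputs reachable under attack is exactly the nominal one: π_Y(Σ^k_α) = {π_Y(⟦σ₀⟧^k)}; in particular the k-controllability of α equals 1. -/
variable {ιI ιO ιU : Type*} {VI : ιI → Type*} {VO : ιO → Type*} {VU : ιU → Type*}
  {Q X Y : Type*}

lemma hequiv_refl (Cα : Set (ιI ⊕ ιO ⊕ ιU)) (σ : CState VI VO VU Q X Y) :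
    HEquiv Cα σ σ := ⟨rfl, fun _ _ => rfl, fun _ _ => rfl, fun _ _ => rfl⟩

lemma nominal_mem (M : CPS VI VO VU Q X Y) (Cα : Set (ιI ⊕ ιO ⊕ ιU))
    (σ₀ : CState VI VO VU Q X Y) : ∀ j, M.step^[j] σ₀ ∈ reach M Cα σ₀ j := by
  intro j
  induction j with
  | zero => simp [reach]
  | succ j ih =>
    refine ⟨M.step^[j] σ₀, ⟨M.step^[j] σ₀, ih, hequiv_refl _ _⟩, ?_⟩
    rw [Function.iterate_succ_apply']

lemma key_lemma (M : CPS VI VO VU Q X Y) (Cα : Set (ιI ⊕ ιO ⊕ ιU)) (k : ℕ)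
    (h : ∀ m, 1 ≤ m → m ≤ k → ProcessIntegrity M Cα m)
    (σ₀ : CState VI VO VU Q X Y) :
    ∀ j m, j + m ≤ k → ∀ σ ∈ reach M Cα σ₀ j,
      piY (M.step^[m] σ) = piY (M.step^[m + j] σ₀) := by
  intro j
  induction j with
  | zero =>
    intro m _ σ hσ
    simp only [reach, Set.mem_singleton_iff] at hσ
    subst hσ; rfl
  | succ j ih =>
    rintro m hm σ ⟨τ, ⟨σ', hσ', hH⟩, rfl⟩
    have h1 : piY (M.step^[m] (M.step τ)) = piY (M.step^[m+1] τ) := by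
      rw [Function.iterate_succ_apply]
    rw [h1, h (m+1) (by omega) (by omega) τ σ' hH,
      ih (m+1) (by omega) σ' hσ']
    congr 2
    omega

/-- if the CPS satisfies `m`-process integrity against the attacker `Cα`
for every `1 ≤ m ≤ k`, then for every initial state `σ₀` the set of outputs reachable
under attack is exactly the nominal one, and the `k`-controllability equals `1`. -/
theorem integrity_to_controllability
    [∀ a, Nonempty (VI a)] [∀ b, Nonempty (VO b)] [∀ c, Nonempty (VU c)]
    [Nonempty Q] [Nonempty X] [Nonempty Y]
    (M : CPS VI VO VU Q X Y) (Cα : Set (ιI ⊕ ιO ⊕ ιU)) (k : ℕ)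
    (h : ∀ m, 1 ≤ m → m ≤ k → ProcessIntegrity M Cα m) :
    ∀ σ₀ : CState VI VO VU Q X Y,
      piY '' reach M Cα σ₀ k = {piY (M.step^[k] σ₀)} ∧
      Cardinal.mk (piY '' reach M Cα σ₀ k) = 1 := by
  intro σ₀
  have heq : piY '' reach M Cα σ₀ k = {piY (M.step^[k] σ₀)} := by
    apply Set.eq_singleton_iff_unique_mem.2
    constructor
    · exact ⟨_, nominal_mem M Cα σ₀ k, rfl⟩
    · rintro y ⟨σ, hσ, rfl⟩
      simpa using key_lemma M Cα k h σ₀ k 0 (by omega) σ hσ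
  refine ⟨heq, ?_⟩
  rw [heq]
  simp
end

section
/- Propagation delay of sensor attacks: if the attacker α controls only digital-input components (C_α ⊆ ιI), then for every initial state σ₀ the attack cannot affect the process output within two cycles: π_Y(Σ^1_α) = {π_Y(⟦σ₀⟧^1)} and π_Y(Σ^2_α) = {π_Y(⟦σ₀⟧^2)}; i.e., the 1-controllability and the 2-controllability of α both equal 1. -/
variable {ιI ιO ιU : Type*} {VI : ιI → Type*} {VO : ιO → Type*} {VU : ιU → Type*}
  {Q X Y : Type*}

/-- propagation delay of sensor attacks: if the attacker controls only
digital-input components, then for every initial state the attack cannot affect the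
process output within two cycles, i.e. the 1- and 2-controllability both equal `1`. -/
theorem sensor_attack_delay
    [∀ a, Nonempty (VI a)] [∀ b, Nonempty (VO b)] [∀ c, Nonempty (VU c)]
    [Nonempty Q] [Nonempty X] [Nonempty Y]
    (M : CPS VI VO VU Q X Y) (Cα : Set (ιI ⊕ ιO ⊕ ιU))
    (hC : ∀ s ∈ Cα, ∃ a : ιI, s = Sum.inl a)
    (σ₀ : CState VI VO VU Q X Y) :
    piY '' reach M Cα σ₀ 1 = {piY (M.step^[1] σ₀)} ∧
    piY '' reach M Cα σ₀ 2 = {piY (M.step^[2] σ₀)} ∧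
    Cardinal.mk (piY '' reach M Cα σ₀ 1) = 1 ∧
    Cardinal.mk (piY '' reach M Cα σ₀ 2) = 1 := by

  -- Under hC, H-equivalent states agree on o, u, q, x, y.
  have key : ∀ σ σ' : CState VI VO VU Q X Y, HEquiv Cα σ σ' →
      σ.1.2.1 = σ'.1.2.1 ∧ σ.1.2.2 = σ'.1.2.2 ∧ σ.2 = σ'.2 := by
    intro σ σ' ⟨h2, _, ho, hu⟩
    refine ⟨funext fun b => ho b ?_, funext fun c => hu c ?_, h2⟩
    · intro hb; obtain ⟨a, ha⟩ := hC _ hb; simp at ha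
    · intro hc; obtain ⟨a, ha⟩ := hC _ hc; simp at ha
  have refl_H : ∀ σ : CState VI VO VU Q X Y, HEquiv Cα σ σ := by
    intro σ; exact ⟨rfl, fun _ _ => rfl, fun _ _ => rfl, fun _ _ => rfl⟩
  -- piY (step σ) depends only on x and u.
  have stepY : ∀ σ σ' : CState VI VO VU Q X Y, HEquiv Cα σ σ' →
      piY (M.step σ) = piY (M.step σ') := by
    intro σ σ' h
    obtain ⟨ho, hu, h2⟩ := key σ σ' h
    simp [CPS.step, piY, hu, h2]
  have stepOU : ∀ σ σ' : CState VI VO VU Q X Y, HEquiv Cα σ σ' →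
      (M.step σ).1.2.2 = (M.step σ').1.2.2 ∧ (M.step σ).2.1.2 = (M.step σ').2.1.2 := by
    intro σ σ' h
    obtain ⟨ho, hu, h2⟩ := key σ σ' h
    simp [CPS.step, ho, hu, h2]
  have h1 : piY '' reach M Cα σ₀ 1 = {piY (M.step^[1] σ₀)} := by
    ext y
    simp only [Set.mem_image, Set.mem_singleton_iff]
    constructor
    · rintro ⟨τ, ⟨σ, ⟨σ', hσ', hH⟩, rfl⟩, rfl⟩
      simp only [reach, Set.mem_singleton_iff] at hσ'
      rw [hσ'] at hH
      simpa using stepY σ σ₀ hH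
    · rintro rfl
      exact ⟨M.step σ₀, ⟨σ₀, ⟨σ₀, rfl, refl_H σ₀⟩, rfl⟩, by simp⟩
  have h2 : piY '' reach M Cα σ₀ 2 = {piY (M.step^[2] σ₀)} := by
    ext y
    simp only [Set.mem_image, Set.mem_singleton_iff]
    constructor
    · rintro ⟨τ, ⟨σ, ⟨σ', hσ', hH⟩, rfl⟩, rfl⟩
      obtain ⟨σ₁, ⟨σ₂, hσ₂, hH₁⟩, rfl⟩ := hσ'
      simp only [reach, Set.mem_singleton_iff] at hσ₂
      rw [hσ₂] at hH₁
      obtain ⟨ho1, hu1, h21⟩ := key σ (M.step σ₁) hH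
      obtain ⟨hu2, hx2⟩ := stepOU σ₁ σ₀ hH₁
      simp only [Function.iterate_succ, Function.iterate_one, Function.comp_apply]
      show M.γΦ σ.2.1.2 σ.1.2.2 = _
      rw [hu1, h21]
      obtain ⟨ho3, hu3, h23⟩ := key σ₁ σ₀ hH₁
      simp [CPS.step, piY, ho3, hu3, h23]
    · rintro rfl
      refine ⟨M.step (M.step σ₀), ⟨M.step σ₀, ⟨M.step σ₀, ⟨σ₀, ⟨σ₀, rfl, refl_H σ₀⟩, rfl⟩, refl_H _⟩, rfl⟩, by simp⟩
  refine ⟨h1, h2, ?_, ?_⟩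
  · rw [h1]; exact Cardinal.mk_singleton _
  · rw [h2]; exact Cardinal.mk_singleton _
end

section
/- Propagation delay of command attacks: if the attacker α controls only digital-output components (C_α ⊆ ιO), then for every initial state σ₀ the attack cannot affect the process output within one cycle: π_Y(Σ^1_α) = {π_Y(⟦σ₀⟧^1)}; i.e., the 1-controllability of α equals 1. -/
variable {ιI ιO ιU : Type*} {VI : ιI → Type*} {VO : ιO → Type*} {VU : ιU → Type*}
  {Q X Y : Type*}

/-- propagation delay of command attacks: if the attacker controls only
digital-output components, then for every initial state the attack cannot affect the
process output within one cycle, i.e. the 1-controllability equals `1`. -/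
theorem command_attack_delay
    [∀ a, Nonempty (VI a)] [∀ b, Nonempty (VO b)] [∀ c, Nonempty (VU c)]
    [Nonempty Q] [Nonempty X] [Nonempty Y]
    (M : CPS VI VO VU Q X Y) (Cα : Set (ιI ⊕ ιO ⊕ ιU))
    (hC : ∀ s ∈ Cα, ∃ b : ιO, s = Sum.inr (Sum.inl b))
    (σ₀ : CState VI VO VU Q X Y) :
    piY '' reach M Cα σ₀ 1 = {piY (M.step^[1] σ₀)} ∧
    Cardinal.mk (piY '' reach M Cα σ₀ 1) = 1 := by
  have key : piY '' reach M Cα σ₀ 1 = {piY (M.step^[1] σ₀)} := by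
    ext y
    simp only [Set.mem_image, Set.mem_singleton_iff, Function.iterate_one]
    constructor
    · rintro ⟨τ, ⟨σ, ⟨σ', hσ', heq⟩, rfl⟩, rfl⟩
      simp only [reach, Set.mem_singleton_iff] at hσ'
      have hx : σ.2 = σ'.2 := heq.1
      have hu : σ.1.2.2 = σ'.1.2.2 := by
        funext c
        exact heq.2.2.2 c (fun h => by obtain ⟨b, hb⟩ := hC _ h; simp at hb)
      simp [piY, CPS.step, hx, hu, hσ']
    · rintro rfl
      refine ⟨M.step σ₀, ⟨σ₀, ⟨σ₀, rfl, ?_⟩, rfl⟩, rfl⟩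
      exact ⟨rfl, fun _ _ => rfl, fun _ _ => rfl, fun _ _ => rfl⟩
  refine ⟨key, ?_⟩
  rw [key]
  simp
end

section
/- Noninterference from i₂ to y₁ (attacker α₂ cannot affect tank T₁): fix x₁(0), x₂(0), x₂'(0) ∈ ℝ and two arbitrary attack sequences a, a' : ℕ → ℝ on the sensed value i₂ (while i₁ reports the true level: i₁(k) = x₁(k)). Let (x₁, x₂) be the trajectory with i₂(k) = a(k) and (x₁', x₂') the trajectory with the same x₁'(0) = x₁(0) and i₂(k) = a'(k). Then x₁(k) = x₁'(k) for all k ∈ ℕ; i.e., the level of tank T₁ is a function of x₁(0) alone and is independent of the attack on i₂. -/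
/-- One cycle of the two-tank water distribution system: given the sensed inputs
`i1, i2` and the current levels `(x1, x2)`, the controller outputs `q₁` if `i1 < r1`,
else `q₂` if `i2 < r2`, else `q₀`, and the levels evolve accordingly. -/
noncomputable def tankStep (w v1 v2 r1 r2 i1 i2 x1 x2 : ℝ) : ℝ × ℝ :=
  if i1 < r1 then (x1 + w - v1, x2 - v2)
  else if i2 < r2 then (x1 - v1, x2 + w - v2)
  else (x1 - v1, x2 - v2)

/-- noninterference from `i₂` to `y₁`: for any two attack sequences
`a, a'` on the sensed value `i₂` (with `i₁` reporting the true level), the resulting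
trajectories of tank `T₁` coincide whenever they start from the same initial level. -/
theorem noninterference_i2_to_y1
    (w v1 v2 r1 r2 L : ℝ)
    (hv1 : 0 < v1) (hv2 : 0 < v2) (hw : v1 + v2 ≤ w)
    (hr1 : 0 < r1) (hr1L : r1 < L) (hr2 : 0 < r2) (hr2L : r2 < L)
    (a a' : ℕ → ℝ) (x1 x2 x1' x2' : ℕ → ℝ)
    (h : ∀ k, (x1 (k + 1), x2 (k + 1)) = tankStep w v1 v2 r1 r2 (x1 k) (a k) (x1 k) (x2 k))
    (h' : ∀ k, (x1' (k + 1), x2' (k + 1)) = tankStep w v1 v2 r1 r2 (x1' k) (a' k) (x1' k) (x2' k))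
    (h0 : x1' 0 = x1 0) :
    ∀ k, x1 k = x1' k := by
  intro k
  induction k with
  | zero => exact h0.symm
  | succ n ih =>
    have e1 := congrArg Prod.fst (h n)
    have e2 := congrArg Prod.fst (h' n)
    simp only [tankStep] at e1 e2
    rw [← ih] at e2
    by_cases hc : x1 n < r1 <;> by_cases hc2 : a n < r2 <;> by_cases hc3 : a' n < r2 <;>
      simp [hc, hc2, hc3] at e1 e2 <;> rw [e1, e2]
end

section
/- Attacker α₂ can empty tank T₂: under the constant attack i₂(k) = L for all k (with i₁ reporting the true level i₁(k) = x₁(k)), the level of tank T₂ satisfies x₂(k) = x₂(0) − k·v₂ for every k ∈ ℕ; in particular there exists k with x₂(k) ≤ 0, i.e., tank T₂ becomes empty. -/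
/-- attacker `α₂` can empty tank `T₂`: under the constant attack
`i₂(k) = L` (with `i₁` reporting the true level), `x₂(k) = x₂(0) − k·v₂` for all `k`,
and there exists `k` with `x₂(k) ≤ 0`, i.e. tank `T₂` becomes empty. -/
theorem attacker2_empties_T2
    (w v1 v2 r1 r2 L : ℝ)
    (hv1 : 0 < v1) (hv2 : 0 < v2) (hw : v1 + v2 ≤ w)
    (hr1 : 0 < r1) (hr1L : r1 < L) (hr2 : 0 < r2) (hr2L : r2 < L)
    (x1 x2 : ℕ → ℝ)
    (h : ∀ k, (x1 (k + 1), x2 (k + 1)) = tankStep w v1 v2 r1 r2 (x1 k) L (x1 k) (x2 k)) :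
    (∀ k : ℕ, x2 k = x2 0 - k * v2) ∧ ∃ k : ℕ, x2 k ≤ 0 := by
  have hstep : ∀ k, x2 (k + 1) = x2 k - v2 := by
    intro k
    have hk := h k
    have : x2 (k + 1) = (tankStep w v1 v2 r1 r2 (x1 k) L (x1 k) (x2 k)).2 := by
      rw [← hk]
    rw [this]
    unfold tankStep
    by_cases h1 : x1 k < r1
    · simp [h1]
    · simp [h1, not_lt.mpr hr2L.le]
  have hall : ∀ k : ℕ, x2 k = x2 0 - k * v2 := by
    intro k
    induction k with
    | zero => simp
    | succ n ih => rw [hstep n, ih]; push_cast; ring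
  refine ⟨hall, ?_⟩
  obtain ⟨k, hk⟩ := Archimedean.arch (x2 0) hv2
  refine ⟨k, ?_⟩
  rw [hall k]
  have : (k : ℝ) * v2 = k • v2 := by simp
  linarith [hk]
end

section
/- Attacker α₂ can overflow tank T₂: assume additionally w ≥ 2v₁, w > 2v₂ and x₁(0) ≥ r₁. Under the constant attack i₂(k) = 0 for all k (with i₁ reporting the true level i₁(k) = x₁(k)), the level of tank T₂ grows without bound: for every 2n steps at least n of the commands are q₂, so x₂(2n) ≥ x₂(0) + n·(w − 2v₂); in particular for every M ∈ ℝ there exists k with x₂(k) ≥ M, and hence tank T₂ reaches its full level L. -/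
theorem le_card_filter_range_two_mul {p : ℕ → Prop} [DecidablePred p]
    (hp : ∀ k, p k ∨ p (k + 1)) (n : ℕ) : n ≤ ((Finset.range (2 * n)).filter p).card := by
  induction n with
  | zero => simp
  | succ n ih =>
    rw [Finset.card_filter] at ih ⊢
    rw [show 2 * (n + 1) = 2 * n + 1 + 1 by ring, Finset.sum_range_succ, Finset.sum_range_succ]
    rcases hp (2 * n) with h | h <;> split_ifs <;> omega

theorem add_mul_le_apply_two_mul {f : ℕ → ℝ} {a : ℝ} (hf : ∀ k, f k + a ≤ f (k + 2)) (n : ℕ) :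
    f 0 + n * a ≤ f (2 * n) := by
  induction n with
  | zero => simp
  | succ n ih =>
    have := hf (2 * n)
    rw [show 2 * (n + 1) = 2 * n + 2 by ring]
    push_cast
    linarith

theorem exists_le_of_add_mul_le {g : ℕ → ℝ} {c a : ℝ} (ha : 0 < a)
    (hg : ∀ n : ℕ, c + n * a ≤ g n) (M : ℝ) : ∃ n, M ≤ g n := by
  obtain ⟨n, hn⟩ := exists_nat_ge ((M - c) / a)
  refine ⟨n, ?_⟩
  have := (div_le_iff₀ ha).mp hn
  linarith [hg n]

namespace TwoTank

variable {w v1 v2 r1 r2 : ℝ} {x1 x2 : ℕ → ℝ}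
  (h : ∀ k, (x1 (k + 1), x2 (k + 1)) = tankStep w v1 v2 r1 r2 (x1 k) 0 (x1 k) (x2 k))
include h

theorem succ_of_lt {k : ℕ} (hk : x1 k < r1) :
    x1 (k + 1) = x1 k + w - v1 ∧ x2 (k + 1) = x2 k - v2 :=
  Prod.mk.inj ((h k).trans (if_pos hk))

theorem succ_of_not_lt (hr2 : 0 < r2) {k : ℕ} (hk : ¬ x1 k < r1) :
    x1 (k + 1) = x1 k - v1 ∧ x2 (k + 1) = x2 k + w - v2 :=
  Prod.mk.inj ((h k).trans ((if_neg hk).trans (if_pos hr2)))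

theorem sub_le_level1 (hr2 : 0 < r2) (hw : v1 ≤ w) (h0 : r1 - v1 ≤ x1 0) (k : ℕ) :
    r1 - v1 ≤ x1 k := by
  induction k with
  | zero => exact h0
  | succ k ih =>
    by_cases hk : x1 k < r1
    · linarith [(succ_of_lt h hk).1]
    · linarith [(succ_of_not_lt h hr2 hk).1, not_lt.mp hk]

theorem not_lt_or_not_lt_succ (hr2 : 0 < r2) (hv1 : 0 < v1) (hw1 : 2 * v1 ≤ w)
    (hx10 : r1 ≤ x1 0) (k : ℕ) : ¬ x1 k < r1 ∨ ¬ x1 (k + 1) < r1 := by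
  by_cases hk : x1 k < r1
  · have hlow := sub_le_level1 h hr2 (by linarith) (by linarith) k
    right
    linarith [(succ_of_lt h hk).1]
  · exact Or.inl hk

theorem level2_add_le_level2_add_two (hr2 : 0 < r2) (hw : 0 ≤ w) {k : ℕ}
    (hq : ¬ x1 k < r1 ∨ ¬ x1 (k + 1) < r1) : x2 k + (w - 2 * v2) ≤ x2 (k + 2) := by
  by_cases hk : x1 k < r1
  · have hk' := hq.resolve_left (not_not.mpr hk)
    linarith [(succ_of_lt h hk).2, (succ_of_not_lt h hr2 hk').2]
  · have hfill := (succ_of_not_lt h hr2 hk).2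
    by_cases hk' : x1 (k + 1) < r1
    · linarith [(succ_of_lt h hk').2]
    · linarith [(succ_of_not_lt h hr2 hk').2]

end TwoTank

theorem attacker2_overflows_T2_general
    (w v1 v2 r1 r2 L : ℝ)
    (hv1 : 0 < v1) (hr2 : 0 < r2)
    (hw1 : 2 * v1 ≤ w) (hw2 : 2 * v2 < w)
    (x1 x2 : ℕ → ℝ) (hx10 : r1 ≤ x1 0)
    (h : ∀ k, (x1 (k + 1), x2 (k + 1)) = tankStep w v1 v2 r1 r2 (x1 k) 0 (x1 k) (x2 k)) :
    (∀ n : ℕ, n ≤ ((Finset.range (2 * n)).filter fun k => ¬ x1 k < r1).card) ∧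
    (∀ n : ℕ, x2 0 + n * (w - 2 * v2) ≤ x2 (2 * n)) ∧
    (∀ M : ℝ, ∃ k : ℕ, M ≤ x2 k) ∧
    (∃ k : ℕ, L ≤ x2 k) := by
  have hq := TwoTank.not_lt_or_not_lt_succ h hr2 hv1 hw1 hx10
  have hx2 : ∀ n : ℕ, x2 0 + n * (w - 2 * v2) ≤ x2 (2 * n) :=
    add_mul_le_apply_two_mul fun k =>
      TwoTank.level2_add_le_level2_add_two h hr2 (by linarith) (hq k)
  have hM : ∀ M : ℝ, ∃ k : ℕ, M ≤ x2 k := fun M =>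
    let ⟨n, hn⟩ := exists_le_of_add_mul_le (by linarith) hx2 M
    ⟨2 * n, hn⟩
  exact ⟨le_card_filter_range_two_mul hq, hx2, hM, hM L⟩

/-- attacker `α₂` can overflow tank `T₂`: assume moreover `w ≥ 2v₁`,
`w > 2v₂` and `x₁(0) ≥ r₁`. Under the constant attack `i₂(k) = 0` (with `i₁` reporting
the true level), in every `2n` steps at least `n` of the commands are `q₂`, so
`x₂(2n) ≥ x₂(0) + n·(w − 2v₂)`; in particular `x₂` exceeds every bound `M` and in
particular reaches the full level `L`. -/
theorem attacker2_overflows_T2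
    (w v1 v2 r1 r2 L : ℝ)
    (hv1 : 0 < v1) (hv2 : 0 < v2) (hw : v1 + v2 ≤ w)
    (hr1 : 0 < r1) (hr1L : r1 < L) (hr2 : 0 < r2) (hr2L : r2 < L)
    (hw1 : 2 * v1 ≤ w) (hw2 : 2 * v2 < w)
    (x1 x2 : ℕ → ℝ) (hx10 : r1 ≤ x1 0)
    (h : ∀ k, (x1 (k + 1), x2 (k + 1)) = tankStep w v1 v2 r1 r2 (x1 k) 0 (x1 k) (x2 k)) :
    (∀ n : ℕ, n ≤ ((Finset.range (2 * n)).filter fun k => ¬ x1 k < r1).card) ∧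
    (∀ n : ℕ, x2 0 + n * (w - 2 * v2) ≤ x2 (2 * n)) ∧
    (∀ M : ℝ, ∃ k : ℕ, M ≤ x2 k) ∧
    (∃ k : ℕ, L ≤ x2 k) :=
  attacker2_overflows_T2_general w v1 v2 r1 r2 L hv1 hr2 hw1 hw2 x1 x2 hx10 h
end

section
/- Attacker α₃ can overflow T₁ and empty T₂: under the constant attack i₁(k) = 0 for all k (with i₂ reporting the true level i₂(k) = x₂(k)), the controller issues q₁ at every step, so x₁(k) = x₁(0) + k·(w − v₁) and x₂(k) = x₂(0) − k·v₂ for all k ∈ ℕ; in particular (since w > v₁ and v₂ > 0) there exist times k₁ and k₂ with x₁(k₁) ≥ L (tank T₁ overflows) and x₂(k₂) ≤ 0 (tank T₂ becomes empty). -/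
/-- attacker `α₃` can overflow `T₁` and empty `T₂`: under the constant
attack `i₁(k) = 0` (with `i₂` reporting the true level), the controller issues `q₁` at
every step, so `x₁(k) = x₁(0) + k·(w − v₁)` and `x₂(k) = x₂(0) − k·v₂`; in particular
there are times `k₁, k₂` with `x₁(k₁) ≥ L` and `x₂(k₂) ≤ 0`. -/
theorem attacker3_overflows_T1_empties_T2
    (w v1 v2 r1 r2 L : ℝ)
    (hv1 : 0 < v1) (hv2 : 0 < v2) (hw : v1 + v2 ≤ w)
    (hr1 : 0 < r1) (hr1L : r1 < L) (hr2 : 0 < r2) (hr2L : r2 < L)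
    (x1 x2 : ℕ → ℝ)
    (h : ∀ k, (x1 (k + 1), x2 (k + 1)) = tankStep w v1 v2 r1 r2 0 (x2 k) (x1 k) (x2 k)) :
    (∀ k : ℕ, x1 k = x1 0 + k * (w - v1)) ∧
    (∀ k : ℕ, x2 k = x2 0 - k * v2) ∧
    (∃ k1 : ℕ, L ≤ x1 k1) ∧
    (∃ k2 : ℕ, x2 k2 ≤ 0) := by
  have hstep : ∀ k, x1 (k+1) = x1 k + w - v1 ∧ x2 (k+1) = x2 k - v2 := by
    intro k
    have hk := h k
    simp [tankStep, hr1] at hk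
    exact hk
  have h1 : ∀ k : ℕ, x1 k = x1 0 + k * (w - v1) := by
    intro k; induction k with
    | zero => simp
    | succ n ih => rw [(hstep n).1, ih]; push_cast; ring
  have h2 : ∀ k : ℕ, x2 k = x2 0 - k * v2 := by
    intro k; induction k with
    | zero => simp
    | succ n ih => rw [(hstep n).2, ih]; push_cast; ring
  refine ⟨h1, h2, ?_, ?_⟩
  · have hpos : 0 < w - v1 := by linarith
    obtain ⟨n, hn⟩ := exists_nat_gt ((L - x1 0) / (w - v1))
    refine ⟨n, ?_⟩
    rw [h1 n]
    have := (div_lt_iff₀ hpos).mp hn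
    linarith
  · obtain ⟨n, hn⟩ := exists_nat_gt (x2 0 / v2)
    refine ⟨n, ?_⟩
    rw [h2 n]
    have := (div_lt_iff₀ hv2).mp hn
    linarith
end

section
/- Attacker α₃ can empty tank T₁: under the constant attack i₁(k) = L for all k (with i₂ reporting the true level i₂(k) = x₂(k)), the controller never issues q₁ (since L ≥ r₁), so x₁(k) = x₁(0) − k·v₁ for every k ∈ ℕ; in particular there exists k with x₁(k) ≤ 0, i.e., tank T₁ becomes empty. -/
/-- attacker `α₃` can empty tank `T₁`: under the constant attack
`i₁(k) = L` (with `i₂` reporting the true level), the controller never issues `q₁`,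
so `x₁(k) = x₁(0) − k·v₁`; in particular there exists `k` with `x₁(k) ≤ 0`. -/
theorem attacker3_empties_T1
    (w v1 v2 r1 r2 L : ℝ)
    (hv1 : 0 < v1) (hv2 : 0 < v2) (hw : v1 + v2 ≤ w)
    (hr1 : 0 < r1) (hr1L : r1 < L) (hr2 : 0 < r2) (hr2L : r2 < L)
    (x1 x2 : ℕ → ℝ)
    (h : ∀ k, (x1 (k + 1), x2 (k + 1)) = tankStep w v1 v2 r1 r2 L (x2 k) (x1 k) (x2 k)) :
    (∀ k : ℕ, x1 k = x1 0 - k * v1) ∧ ∃ k : ℕ, x1 k ≤ 0 := by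
  have key : ∀ k : ℕ, x1 k = x1 0 - k * v1 := by
    intro k
    induction k with
    | zero => simp
    | succ n ih =>
      have hstep := h n
      have hnot : ¬ (L < r1) := not_lt.mpr hr1L.le
      simp only [tankStep, if_neg hnot] at hstep
      by_cases hc : x2 n < r2 <;> simp [hc] at hstep <;>
        · rw [hstep.1, ih]; push_cast; ring
  refine ⟨key, ?_⟩
  obtain ⟨n, hn⟩ := Archimedean.arch (x1 0) hv1
  refine ⟨n, ?_⟩
  rw [key n]
  have : (n : ℝ) * v1 = n • v1 := by simp
  linarith [hn, this ▸ hn]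
end

section
/- Attacker α₃ cannot raise the level of T₂ above its operational bound: for EVERY attack sequence a : ℕ → ℝ on i₁ (i.e., i₁(k) = a(k), while i₂ reports the true level i₂(k) = x₂(k)), the level of tank T₂ satisfies x₂(k) ≤ max(x₂(0), r₂ + w − v₂) for all k ∈ ℕ. In particular, if x₂(0) ≤ r₂ + w − v₂ < L then no attack on i₁ can ever make tank T₂ full. -/
/-- attacker `α₃` cannot raise `T₂` above its operational bound:
for every attack sequence `a` on `i₁` (with `i₂` reporting the true level),
`x₂(k) ≤ max (x₂(0)) (r₂ + w − v₂)` for all `k`; in particular, if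
`x₂(0) ≤ r₂ + w − v₂ < L`, then no attack on `i₁` can ever make tank `T₂` full. -/
theorem attacker3_cannot_fill_T2
    (w v1 v2 r1 r2 L : ℝ)
    (hv1 : 0 < v1) (hv2 : 0 < v2) (hw : v1 + v2 ≤ w)
    (hr1 : 0 < r1) (hr1L : r1 < L) (hr2 : 0 < r2) (hr2L : r2 < L)
    (a : ℕ → ℝ) (x1 x2 : ℕ → ℝ)
    (h : ∀ k, (x1 (k + 1), x2 (k + 1)) = tankStep w v1 v2 r1 r2 (a k) (x2 k) (x1 k) (x2 k)) :
    (∀ k : ℕ, x2 k ≤ max (x2 0) (r2 + w - v2)) ∧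
    (x2 0 ≤ r2 + w - v2 → r2 + w - v2 < L → ∀ k : ℕ, x2 k < L) := by
  have key : ∀ k, x2 k ≤ max (x2 0) (r2 + w - v2) := by
    intro k
    induction k with
    | zero => exact le_max_left _ _
    | succ n ih =>
      have hn := h n
      unfold tankStep at hn
      by_cases h1 : a n < r1
      · simp [h1] at hn
        have : x2 (n+1) = x2 n - v2 := hn.2
        linarith [le_of_lt hv2, ih]
      · by_cases h2 : x2 n < r2
        · simp [h1, h2] at hn
          have : x2 (n+1) = x2 n + w - v2 := hn.2
          have : x2 (n+1) ≤ r2 + w - v2 := by linarith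
          exact le_trans this (le_max_right _ _)
        · simp [h1, h2] at hn
          have : x2 (n+1) = x2 n - v2 := hn.2
          linarith [le_of_lt hv2, ih]
  refine ⟨key, fun h0 hL k => ?_⟩
  have := key k
  have : x2 k ≤ r2 + w - v2 := by
    rcases max_cases (x2 0) (r2 + w - v2) with ⟨he,_⟩|⟨he,_⟩ <;> rw [he] at this <;> linarith
  linarith
end

section
/- Attack-free safety of the two-tank controller: assume additionally w ≥ 2v₁ and w ≥ 2v₂, and that both sensors report the true levels (i₁(k) = x₁(k), i₂(k) = x₂(k)). If r₁ ≤ x₁(0) ≤ r₁ + w − v₁ and r₂ ≤ x₂(0) ≤ r₂ + w − v₂, then for all k ∈ ℕ: r₁ − v₁ ≤ x₁(k) ≤ r₁ + w − v₁ and r₂ − 2v₂ ≤ x₂(k) ≤ r₂ + w − v₂. In particular, if r₁ > v₁, r₂ > 2v₂, r₁ + w − v₁ < L and r₂ + w − v₂ < L, then in the absence of an attacker the system never reaches a critical state (no tank is ever empty or full). -/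
/-- attack-free safety of the two-tank controller: assume moreover
`w ≥ 2v₁` and `w ≥ 2v₂`, and that both sensors report the true levels. If
`r₁ ≤ x₁(0) ≤ r₁ + w − v₁` and `r₂ ≤ x₂(0) ≤ r₂ + w − v₂`, then for all `k`,
`r₁ − v₁ ≤ x₁(k) ≤ r₁ + w − v₁` and `r₂ − 2v₂ ≤ x₂(k) ≤ r₂ + w − v₂`; in particular,
if `r₁ > v₁`, `r₂ > 2v₂`, `r₁ + w − v₁ < L` and `r₂ + w − v₂ < L`, the system never
reaches a critical state (no tank is ever empty or full). -/
theorem attack_free_safety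
    (w v1 v2 r1 r2 L : ℝ)
    (hv1 : 0 < v1) (hv2 : 0 < v2) (hw : v1 + v2 ≤ w)
    (hr1 : 0 < r1) (hr1L : r1 < L) (hr2 : 0 < r2) (hr2L : r2 < L)
    (hw1 : 2 * v1 ≤ w) (hw2 : 2 * v2 ≤ w)
    (x1 x2 : ℕ → ℝ)
    (h : ∀ k, (x1 (k + 1), x2 (k + 1)) = tankStep w v1 v2 r1 r2 (x1 k) (x2 k) (x1 k) (x2 k))
    (hx10 : r1 ≤ x1 0) (hx10' : x1 0 ≤ r1 + w - v1)
    (hx20 : r2 ≤ x2 0) (hx20' : x2 0 ≤ r2 + w - v2) :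
    (∀ k : ℕ, r1 - v1 ≤ x1 k ∧ x1 k ≤ r1 + w - v1 ∧ r2 - 2 * v2 ≤ x2 k ∧ x2 k ≤ r2 + w - v2) ∧
    (v1 < r1 → 2 * v2 < r2 → r1 + w - v1 < L → r2 + w - v2 < L →
      ∀ k : ℕ, 0 < x1 k ∧ x1 k < L ∧ 0 < x2 k ∧ x2 k < L) := by
  have key : ∀ k : ℕ, r1 - v1 ≤ x1 k ∧ x1 k ≤ r1 + w - v1 ∧ x2 k ≤ r2 + w - v2 ∧
      (r2 - v2 ≤ x2 k ∨ (r2 - 2 * v2 ≤ x2 k ∧ r1 ≤ x1 k)) := by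
    intro k
    induction k with
    | zero => exact ⟨by linarith, hx10', hx20', Or.inl (by linarith)⟩
    | succ n ih =>
      obtain ⟨A, B, C, D⟩ := ih
      have hs := h n
      unfold tankStep at hs
      split_ifs at hs with h1 h2 <;>
        rw [Prod.ext_iff] at hs <;> obtain ⟨e1, e2⟩ := hs <;> simp only at e1 e2
      · have hD : r2 - v2 ≤ x2 n := by
          rcases D with D | ⟨_, hD2⟩
          · exact D
          · linarith
        exact ⟨by linarith, by linarith, by linarith, Or.inr ⟨by linarith, by linarith⟩⟩
      · have hD : r2 - 2 * v2 ≤ x2 n := by rcases D with D | ⟨D, _⟩ <;> linarith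
        push_neg at h1
        exact ⟨by linarith, by linarith, by linarith, Or.inl (by linarith)⟩
      · push_neg at h1 h2
        exact ⟨by linarith, by linarith, by linarith, Or.inl (by linarith)⟩
  have main : ∀ k : ℕ, r1 - v1 ≤ x1 k ∧ x1 k ≤ r1 + w - v1 ∧ r2 - 2 * v2 ≤ x2 k ∧
      x2 k ≤ r2 + w - v2 := by
    intro k
    obtain ⟨A, B, C, D⟩ := key k
    refine ⟨A, B, ?_, C⟩
    rcases D with D | ⟨D, _⟩ <;> linarith
  refine ⟨main, fun h1 h2 h3 h4 k => ?_⟩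
  obtain ⟨A, B, C, D⟩ := main k
  exact ⟨by linarith, by linarith, by linarith, by linarith⟩
end

section
/- The redesigned (fair) controller protects T₂ from attacker α₃: assume additionally w ≥ 2v₂ and x₂(0) ≥ r₂. Then for EVERY attack sequence a : ℕ → ℝ on i₁ (i.e., i₁(k) = a(k), while i₂ reports the true level i₂(k) = x₂(k)) and every initial controller mode, the level of tank T₂ under the redesigned controller satisfies x₂(k) ≥ r₂ − 2v₂ for all k ∈ ℕ. In particular, if r₂ > 2v₂, the attacker can never empty tank T₂. -/
/-- One cycle of the two-tank system under the redesigned (fair) controller.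
A state is `(x1, x2, m)` where `m : Bool` is the controller mode (`true` = `m₁`,
`false` = `m₂`). If `i1 < r1` and `i2 < r2` then in mode `m₁` the command is `q₁`
and the mode switches to `m₂`, while in mode `m₂` the command is `q₂` and the mode
switches to `m₁`; else if `i1 < r1` the command is `q₁`; else if `i2 < r2` the
command is `q₂`; else the command is `q₀` (mode unchanged in the last three cases). -/
noncomputable def fairStep (w v1 v2 r1 r2 i1 i2 : ℝ) (s : ℝ × ℝ × Bool) :
    ℝ × ℝ × Bool :=
  if i1 < r1 ∧ i2 < r2 then
    if s.2.2 then (s.1 + w - v1, s.2.1 - v2, false)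
    else (s.1 - v1, s.2.1 + w - v2, true)
  else if i1 < r1 then (s.1 + w - v1, s.2.1 - v2, s.2.2)
  else if i2 < r2 then (s.1 - v1, s.2.1 + w - v2, s.2.2)
  else (s.1 - v1, s.2.1 - v2, s.2.2)

/-- the fair controller protects `T₂` from attacker `α₃`: assume
moreover `w ≥ 2v₂` and `x₂(0) ≥ r₂`. For every attack sequence `a` on `i₁` (with `i₂`
reporting the true level) and every initial controller mode, `x₂(k) ≥ r₂ − 2v₂` for
all `k`; in particular, if `r₂ > 2v₂`, the attacker can never empty tank `T₂`. -/
theorem fair_controller_protects_T2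
    (w v1 v2 r1 r2 L : ℝ)
    (hv1 : 0 < v1) (hv2 : 0 < v2) (hw : v1 + v2 ≤ w)
    (hr1 : 0 < r1) (hr1L : r1 < L) (hr2 : 0 < r2) (hr2L : r2 < L)
    (hw2 : 2 * v2 ≤ w)
    (a : ℕ → ℝ) (x1 x2 : ℕ → ℝ) (m : ℕ → Bool)
    (hx20 : r2 ≤ x2 0)
    (h : ∀ k, (x1 (k + 1), x2 (k + 1), m (k + 1)) =
      fairStep w v1 v2 r1 r2 (a k) (x2 k) (x1 k, x2 k, m k)) :
    (∀ k : ℕ, r2 - 2 * v2 ≤ x2 k) ∧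
    (2 * v2 < r2 → ∀ k : ℕ, 0 < x2 k) := by
  have key : ∀ k, r2 ≤ x2 k ∨ (m k = true ∧ r2 - v2 ≤ x2 k) ∨
      (m k = false ∧ r2 - 2 * v2 ≤ x2 k) := by
    intro k
    induction k with
    | zero => exact Or.inl hx20
    | succ n ih =>
      have hstep := h n
      unfold fairStep at hstep
      by_cases hc : a n < r1 ∧ x2 n < r2
      · cases hm : m n with
        | true =>
          simp only [hc, hm, if_true] at hstep
          have h2 := congrArg (fun p : ℝ × ℝ × Bool => p.2.1) hstep
          have h3 := congrArg (fun p : ℝ × ℝ × Bool => p.2.2) hstep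
          simp at h2 h3
          right; right
          refine ⟨h3, ?_⟩
          have hx : r2 - v2 ≤ x2 n := by
            rcases ih with h' | ⟨_, h'⟩ | ⟨hf, _⟩
            · linarith [hc.2]
            · exact h'
            · rw [hm] at hf; exact absurd hf (by simp)
          rw [h2]; linarith
        | false =>
          simp only [hc, hm, if_true, Bool.false_eq_true, if_false] at hstep
          have h2 := congrArg (fun p : ℝ × ℝ × Bool => p.2.1) hstep
          have h3 := congrArg (fun p : ℝ × ℝ × Bool => p.2.2) hstep
          simp at h2 h3
          right; left
          refine ⟨h3, ?_⟩
          have hx : r2 - 2 * v2 ≤ x2 n := by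
            rcases ih with h' | ⟨_, h'⟩ | ⟨_, h'⟩ <;> linarith
          rw [h2]; linarith
      · have hx2ge : ∀ (hlt : ¬ x2 n < r2), True := fun _ => trivial
        by_cases h1c : a n < r1
        · -- then ¬ x2 n < r2
          have hx2 : ¬ x2 n < r2 := fun hx => hc ⟨h1c, hx⟩
          simp only [hc, h1c, hx2, if_true, if_false] at hstep
          have h2 := congrArg (fun p : ℝ × ℝ × Bool => p.2.1) hstep
          have h3 := congrArg (fun p : ℝ × ℝ × Bool => p.2.2) hstep
          simp at h2 h3
          have hx : r2 ≤ x2 n := not_lt.mp hx2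
          cases hmn : m (n+1) with
          | true => right; left; exact ⟨rfl, by rw [h2]; linarith⟩
          | false => right; right; exact ⟨rfl, by rw [h2]; linarith⟩
        · by_cases h2c : x2 n < r2
          · simp only [hc, h1c, h2c, if_true, if_false] at hstep
            have h2 := congrArg (fun p : ℝ × ℝ × Bool => p.2.1) hstep
            have h3 := congrArg (fun p : ℝ × ℝ × Bool => p.2.2) hstep
            simp at h2 h3
            have hx : r2 - 2 * v2 ≤ x2 n := by
              rcases ih with h' | ⟨_, h'⟩ | ⟨_, h'⟩ <;> linarith
            cases hmn : m (n+1) with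
            | true => right; left; exact ⟨rfl, by rw [h2]; linarith⟩
            | false => right; right; exact ⟨rfl, by rw [h2]; linarith⟩
          · simp only [hc, h1c, h2c, if_false] at hstep
            have h2 := congrArg (fun p : ℝ × ℝ × Bool => p.2.1) hstep
            have h3 := congrArg (fun p : ℝ × ℝ × Bool => p.2.2) hstep
            simp at h2 h3
            have hx : r2 ≤ x2 n := not_lt.mp h2c
            cases hmn : m (n+1) with
            | true => right; left; exact ⟨rfl, by rw [h2]; linarith⟩
            | false => right; right; exact ⟨rfl, by rw [h2]; linarith⟩
  have main : ∀ k : ℕ, r2 - 2 * v2 ≤ x2 k := by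
    intro k
    rcases key k with h' | ⟨_, h'⟩ | ⟨_, h'⟩ <;> linarith
  exact ⟨main, fun hr k => by linarith [main k]⟩
end

section
/- Under the redesigned (fair) controller, attacker α₃ still cannot raise the level of T₂ above its operational bound: for EVERY attack sequence a : ℕ → ℝ on i₁ (i.e., i₁(k) = a(k), while i₂ reports the true level i₂(k) = x₂(k)) and every initial controller mode, x₂(k) ≤ max(x₂(0), r₂ + w − v₂) for all k ∈ ℕ. -/
/-- under the fair controller `α₃` still cannot raise `T₂` above its
operational bound: for every attack sequence `a` on `i₁` (with `i₂` reporting the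
true level) and every initial controller mode, `x₂(k) ≤ max (x₂(0)) (r₂ + w − v₂)`
for all `k`. -/
theorem fair_controller_T2_upper_bound
    (w v1 v2 r1 r2 L : ℝ)
    (hv1 : 0 < v1) (hv2 : 0 < v2) (hw : v1 + v2 ≤ w)
    (hr1 : 0 < r1) (hr1L : r1 < L) (hr2 : 0 < r2) (hr2L : r2 < L)
    (a : ℕ → ℝ) (x1 x2 : ℕ → ℝ) (m : ℕ → Bool)
    (h : ∀ k, (x1 (k + 1), x2 (k + 1), m (k + 1)) =
      fairStep w v1 v2 r1 r2 (a k) (x2 k) (x1 k, x2 k, m k)) :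
    ∀ k : ℕ, x2 k ≤ max (x2 0) (r2 + w - v2) := by
  intro k
  induction k with
  | zero => exact le_max_left _ _
  | succ k ih =>
    have hk := h k
    have hx2 : x2 (k + 1) = (fairStep w v1 v2 r1 r2 (a k) (x2 k) (x1 k, x2 k, m k)).2.1 := by
      rw [← hk]
    rw [hx2]
    unfold fairStep
    dsimp only
    split_ifs with h1 h2 h3 h4 <;>
      simp only [] <;>
      first
        | (exact le_trans (by linarith) ih)
        | (exact le_max_of_le_right (by linarith [h1.2]))
        | (exact le_max_of_le_right (by linarith))
end
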